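/- arXiv:2308.14606 — 5 statements merged into one kernel-verified Lean document; each statement's English description precedes it below -/
import Mathlib

section
/- Let (H^k) be a nonnegative sequence satisfying H^{k+1} ≤ (1−ω²)H^k + A/(k+k_0)² for all k ≥ 0, where ω ∈ (0,1), A ≥ 0, and k_0 ≥ 1. Then there exists a constant a ≥ (k_0+1)²/k_0² such that H^k ≤ (1−ω²)^k H^0 + (a·A/ω²)·1/(k+k_0)² for all k ≥ 0. -/
/-!
Subtracting the homogeneous part `(1 - ω²)ᵏ H⁰`, it suffices to dominate the remainder by a
supersolution of the recursion. `1 / (k + k₀)²` itself is not one when `k` is small compared with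
`1 / ω²`, but the shifted profile `B / (k + k₀ + c)²` with `c = 4 / ω²` is, once `B` is large enough;
dropping the shift afterwards only enlarges the bound.
-/

theorem le_of_le_mul_add_of_mul_add_le {G U b : ℕ → ℝ} {r : ℝ} (hr : 0 ≤ r)
    (hG : ∀ k, G (k + 1) ≤ r * G k + b k) (hU : ∀ k, r * U k + b k ≤ U (k + 1))
    (h0 : G 0 ≤ U 0) : ∀ k, G k ≤ U k := by
  intro k
  induction k with
  | zero => exact h0
  | succ k ih => linarith [hG k, hU k, mul_le_mul_of_nonneg_left ih hr]

theorem succ_sq_div_sq_le_four {x : ℝ} (hx : 1 ≤ x) : (x + 1) ^ 2 / x ^ 2 ≤ 4 := by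
  rw [div_le_iff₀ (by positivity)]
  nlinarith

theorem one_sub_half_mul_add_one_sq_le {q t : ℝ} (ht : 0 ≤ t)
    (hqt : 4 ≤ q * (t + 1)) : (1 - q / 2) * (t + 1) ^ 2 ≤ t ^ 2 := by
  nlinarith [mul_le_mul_of_nonneg_right hqt (by linarith : (0 : ℝ) ≤ t + 1)]

theorem one_div_sq_le_shift {c s : ℝ} (hc : 0 ≤ c) (hs : 1 ≤ s) :
    1 / s ^ 2 ≤ (1 + c) ^ 2 / (s + c) ^ 2 := by
  rw [div_le_div_iff₀ (by positivity) (by positivity), one_mul]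
  have : s + c ≤ (1 + c) * s := by nlinarith
  nlinarith [pow_le_pow_left₀ (by linarith) this 2]

theorem shifted_inv_sq_supersolution {q A B c s : ℝ} (hq : 0 < q) (hA : 0 ≤ A) (hc : 0 ≤ c)
    (hqc : 4 ≤ q * (c + 2)) (hB : 2 * A * (1 + c) ^ 2 ≤ q * B) (hs : 1 ≤ s) :
    (1 - q) * (B / (s + c) ^ 2) + A / s ^ 2 ≤ B / (s + c + 1) ^ 2 := by
  set t := s + c
  have ht : 1 ≤ t := by simp only [t]; linarith
  have hB0 : 0 ≤ B := by nlinarith [mul_nonneg hA (sq_nonneg (1 + c))]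
  have hforcing : A / s ^ 2 ≤ A * (1 + c) ^ 2 / t ^ 2 := by
    simpa only [mul_one_div, mul_div_assoc] using
      mul_le_mul_of_nonneg_left (one_div_sq_le_shift hc hs) hA
  have hdecay : (1 - q / 2) * (t + 1) ^ 2 ≤ t ^ 2 :=
    one_sub_half_mul_add_one_sq_le (by linarith)
      (le_trans hqc (by simp only [t]; nlinarith))
  calc (1 - q) * (B / t ^ 2) + A / s ^ 2
      ≤ ((1 - q) * B + A * (1 + c) ^ 2) / t ^ 2 := by
        rw [add_div, mul_div_assoc]; linarith
    _ ≤ (1 - q / 2) * B / t ^ 2 := by gcongr; linarith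
    _ ≤ B / (t + 1) ^ 2 := by
        rw [div_le_div_iff₀ (by positivity) (by positivity)]
        nlinarith [mul_le_mul_of_nonneg_left hdecay hB0]

theorem stmt_10_general (H : ℕ → ℝ)
    (omega A : ℝ) (homega0 : 0 < omega) (homega1 : omega < 1) (hA : 0 ≤ A)
    (k0 : ℕ) (hk0 : 1 ≤ k0)
    (hrec : ∀ k : ℕ, H (k + 1) ≤ (1 - omega ^ 2) * H k + A / ((k : ℝ) + k0) ^ 2) :
    ∃ a : ℝ, ((k0 : ℝ) + 1) ^ 2 / (k0 : ℝ) ^ 2 ≤ a ∧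
      ∀ k : ℕ, H k ≤ (1 - omega ^ 2) ^ k * H 0 + (a * A / omega ^ 2) / ((k : ℝ) + k0) ^ 2 := by
  set q := omega ^ 2
  have hq0 : 0 < q := by positivity
  have hq1 : q < 1 := by nlinarith
  have hk0' : (1 : ℝ) ≤ k0 := by exact_mod_cast hk0
  set c := 4 / q
  have hc : 0 ≤ c := by positivity
  have hc4 : 4 ≤ c := by rw [le_div_iff₀ hq0]; nlinarith
  set a := 2 * (1 + c) ^ 2
  set B := a * A / q
  refine ⟨a, (succ_sq_div_sq_le_four hk0').trans (by nlinarith), fun k => ?_⟩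
  have hsuper : ∀ k : ℕ, H k ≤ (1 - q) ^ k * H 0 + B / ((k : ℝ) + k0 + c) ^ 2 := by
    refine le_of_le_mul_add_of_mul_add_le (by linarith) hrec (fun k => ?_) (by
      simp only [pow_zero, one_mul, CharP.cast_eq_zero, zero_add, le_add_iff_nonneg_right]
      positivity)
    have hstep := shifted_inv_sq_supersolution (B := B) hq0 hA hc
      (by simp only [c]; field_simp; linarith) (by simp only [B]; field_simp; linarith)
      (by linarith [(Nat.cast_nonneg k : (0 : ℝ) ≤ k)] : (1 : ℝ) ≤ k + k0)
    push_cast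
    rw [pow_succ' (1 - q) k, show (k : ℝ) + 1 + k0 + c = k + k0 + c + 1 by ring]
    linarith
  have hshift : ((k : ℝ) + k0) ^ 2 ≤ ((k : ℝ) + k0 + c) ^ 2 :=
    pow_le_pow_left₀ (by positivity) (by linarith) 2
  exact (hsuper k).trans (by gcongr)

theorem stmt_10 (H : ℕ → ℝ) (hpos : ∀ k, 0 ≤ H k)
    (omega A : ℝ) (homega0 : 0 < omega) (homega1 : omega < 1) (hA : 0 ≤ A)
    (k0 : ℕ) (hk0 : 1 ≤ k0)
    (hrec : ∀ k : ℕ, H (k + 1) ≤ (1 - omega ^ 2) * H k + A / ((k : ℝ) + k0) ^ 2) :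
    ∃ a : ℝ, ((k0 : ℝ) + 1) ^ 2 / (k0 : ℝ) ^ 2 ≤ a ∧
      ∀ k : ℕ, H k ≤ (1 - omega ^ 2) ^ k * H 0 + (a * A / omega ^ 2) / ((k : ℝ) + k0) ^ 2 :=
  stmt_10_general H omega A homega0 homega1 hA k0 hk0 hrec
end

section
/- Let x_1, ..., x_R ∈ R^D and x̂ ∈ R^D. Then ∑_{d=1}^D max_{m} ([x_m]_d − [x̂]_d)² ≤ min{D, R} · max_m ‖x_m − x̂‖², where [y]_d denotes the d-th coordinate and the maxima are over m ∈ {1,...,R}. -/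
/-!
Write `a m d = ([x_m]_d - [x̂]_d)²` and `M = max_m ‖x_m - x̂‖² = max_m ∑_d a m d`.
Each coordinate maximum `max_m a m d` is at most `M`, which gives the bound `D · M`;
it is also at most `∑_m a m d`, and summing over `d` and swapping the sums gives `R · M`.
-/

open Finset

namespace Finset

variable {ι κ : Type*} {s : Finset ι} {t : Finset κ} (hs : s.Nonempty) {a : ι → κ → ℝ}

theorem sum_sup'_le_card_mul_sup'_sum (ha : ∀ i ∈ s, ∀ j ∈ t, 0 ≤ a i j) :
    ∑ j ∈ t, s.sup' hs (a · j) ≤ #t * s.sup' hs fun i => ∑ j ∈ t, a i j := by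
  rw [← nsmul_eq_mul]
  refine sum_le_card_nsmul _ _ _ fun j hj => sup'_le hs _ fun i hi => ?_
  calc a i j ≤ ∑ j ∈ t, a i j := single_le_sum (ha i hi) hj
    _ ≤ _ := le_sup' (fun i => ∑ j ∈ t, a i j) hi

theorem sum_sup'_le_card_index_mul_sup'_sum (ha : ∀ i ∈ s, ∀ j ∈ t, 0 ≤ a i j) :
    ∑ j ∈ t, s.sup' hs (a · j) ≤ #s * s.sup' hs fun i => ∑ j ∈ t, a i j :=
  calc ∑ j ∈ t, s.sup' hs (a · j)
      ≤ ∑ j ∈ t, ∑ i ∈ s, a i j :=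
        sum_le_sum fun j hj => sup'_le hs _ fun i hi =>
          single_le_sum (fun i hi => ha i hi j hj) hi
    _ = ∑ i ∈ s, ∑ j ∈ t, a i j := sum_comm
    _ ≤ #s * s.sup' hs fun i => ∑ j ∈ t, a i j := by
        rw [← nsmul_eq_mul]
        exact sum_le_card_nsmul _ _ _ fun i hi => le_sup' (fun i => ∑ j ∈ t, a i j) hi

theorem sum_sup'_le_min_card_mul_sup'_sum (ha : ∀ i ∈ s, ∀ j ∈ t, 0 ≤ a i j) :
    ∑ j ∈ t, s.sup' hs (a · j) ≤ min (#t : ℝ) #s * s.sup' hs fun i => ∑ j ∈ t, a i j := by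
  rcases min_choice (#t : ℝ) #s with h | h <;> rw [h]
  · exact sum_sup'_le_card_mul_sup'_sum hs ha
  · exact sum_sup'_le_card_index_mul_sup'_sum hs ha

end Finset

theorem stmt_12 (R D : ℕ) (hne : (Finset.univ : Finset (Fin R)).Nonempty)
    (x : Fin R → EuclideanSpace ℝ (Fin D))
    (xhat : EuclideanSpace ℝ (Fin D)) :
    ∑ d : Fin D, (Finset.univ.sup' hne fun m => (x m d - xhat d) ^ 2)
      ≤ (min D R : ℝ) * Finset.univ.sup' hne fun m => ‖x m - xhat‖ ^ 2 := by
  have hnorm (m : Fin R) : ‖x m - xhat‖ ^ 2 = ∑ d, (x m d - xhat d) ^ 2 :=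
    EuclideanSpace.real_norm_sq_eq _
  simp only [hnorm]
  simpa using sum_sup'_le_min_card_mul_sup'_sum hne (t := univ)
    (a := fun m d => (x m d - xhat d) ^ 2) fun _ _ _ _ => sq_nonneg _
end

section
/- Let S be a finite set of vectors in R^D with weighted average x̂ = ∑_{m∈S} w_m x_m where w_m ≥ 0 and ∑_{m∈S} w_m = 1. Let T ⊆ S with total weight W_T = ∑_{m∈T} w_m < 1, and let x̂_T = (∑_{m∈T} w_m x_m)/W_T be the renormalized weighted average over T. Then ‖x̂_T − x̂‖ ≤ ((1−W_T)/W_T)·max_{m∈S∖T} ‖x_m − x̂_T‖. -/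
/-!
On `S \ T` the deviation `xhat - xhatT` is the combination `∑ w m • (x m - xhatT)`, whose
weights add up to `1 - W_T`; the triangle inequality bounds it by `(1 - W_T)` times the largest
`‖x m - xhatT‖`, and `1 - W_T ≤ (1 - W_T) / W_T` as `0 < W_T < 1`.
-/

open Finset

section WeightedSum

variable {ι E : Type*}

theorem sum_smul_sub_eq_sum_sdiff_smul_sub [AddCommGroup E] [Module ℝ E] [DecidableEq ι]
    {S T : Finset ι} (hTS : T ⊆ S) {w : ι → ℝ} (hw : ∑ m ∈ S, w m = 1) {x : ι → E} {y : E}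
    (hy : ∑ m ∈ T, w m • x m = (∑ m ∈ T, w m) • y) :
    ∑ m ∈ S, w m • x m - y = ∑ m ∈ S \ T, w m • (x m - y) := by
  have hsdiff : ∑ m ∈ S \ T, w m = 1 - ∑ m ∈ T, w m := by
    rw [← hw, ← sum_sdiff hTS, add_sub_cancel_right]
  simp only [smul_sub]
  rw [sum_sub_distrib, ← sum_smul, hsdiff, ← sum_sdiff hTS, hy]
  module

theorem norm_sum_smul_le_sum_mul_sup' [SeminormedAddCommGroup E] [NormedSpace ℝ E]
    (s : Finset ι) (hs : s.Nonempty) {w : ι → ℝ} (hw : ∀ m ∈ s, 0 ≤ w m) (v : ι → E) :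
    ‖∑ m ∈ s, w m • v m‖ ≤ (∑ m ∈ s, w m) * s.sup' hs (fun m => ‖v m‖) := by
  rw [sum_mul]
  refine (norm_sum_le _ _).trans (sum_le_sum fun m hm => ?_)
  rw [norm_smul, Real.norm_of_nonneg (hw m hm)]
  exact mul_le_mul_of_nonneg_left (le_sup' (fun m => ‖v m‖) hm) (hw m hm)

end WeightedSum

theorem stmt_13 {ι : Type*} [DecidableEq ι] (D : ℕ) (S T : Finset ι) (hTS : T ⊆ S)
    (hST : (S \ T).Nonempty)
    (x : ι → EuclideanSpace ℝ (Fin D))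
    (w : ι → ℝ) (hw0 : ∀ m ∈ S, 0 ≤ w m) (hw1 : ∑ m ∈ S, w m = 1)
    (WT : ℝ) (hWT : WT = ∑ m ∈ T, w m) (hWT0 : 0 < WT) (hWT1 : WT < 1)
    (xhat xhatT : EuclideanSpace ℝ (Fin D))
    (hxhat : xhat = ∑ m ∈ S, w m • x m)
    (hxhatT : xhatT = WT⁻¹ • ∑ m ∈ T, w m • x m) :
    ‖xhatT - xhat‖ ≤ ((1 - WT) / WT) * (S \ T).sup' hST fun m => ‖x m - xhatT‖ := by
  have hsumT : ∑ m ∈ T, w m • x m = (∑ m ∈ T, w m) • xhatT := by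
    rw [hxhatT, ← hWT, smul_inv_smul₀ hWT0.ne']
  have hsdiff : ∑ m ∈ S \ T, w m = 1 - WT := by
    rw [hWT, ← hw1, ← sum_sdiff hTS, add_sub_cancel_right]
  have hM : 0 ≤ (S \ T).sup' hST fun m => ‖x m - xhatT‖ :=
    (norm_nonneg _).trans (le_sup' (fun m => ‖x m - xhatT‖) hST.choose_spec)
  calc ‖xhatT - xhat‖ = ‖∑ m ∈ S \ T, w m • (x m - xhatT)‖ := by
        rw [norm_sub_rev, hxhat, sum_smul_sub_eq_sum_sdiff_smul_sub hTS hw1 hsumT]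
    _ ≤ (1 - WT) * (S \ T).sup' hST fun m => ‖x m - xhatT‖ := by
        rw [← hsdiff]
        exact norm_sum_smul_le_sum_mul_sup' _ hST (fun m hm => hw0 m (mem_sdiff.mp hm).1) _
    _ ≤ ((1 - WT) / WT) * (S \ T).sup' hST fun m => ‖x m - xhatT‖ := by
        gcongr
        exact le_div_self (by linarith) hWT0 hWT1.le
end

section
/- Trimmed mean over a fully connected network: let R > B ≥ 1, let x_1, ..., x_R ∈ R (scalars) be honest values with average x̄, and let b_1, ..., b_B ∈ R be arbitrary. Suppose the trimmed mean removes the B largest and B smallest of the R+B values x_1,...,x_R,b_1,...,b_B and averages the rest, obtaining y. If all b_j are removed by the trimming, then |y − x̄| ≤ (2B/(R−B+1))·max_n |x_n − x̄|. -/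
/-! Once every arbitrary value `b j` is trimmed, the `R - B` surviving values are honest, so `y` is the
average of the honest values over a set `T` with `|Tᶜ| = B`. The deviations `x n - x̄` sum to zero,
hence their sum over `T` is minus their sum over `Tᶜ`, which is at most `B · max |x n - x̄|` in
absolute value. This gives `|y - x̄| ≤ B/(R-B) · max |x n - x̄|`, and `1/(R-B) ≤ 2/(R-B+1)`. -/

open Finset

section Mean

variable {ι : Type*} [Fintype ι]

theorem sum_sub_mean_eq_zero (x : ι → ℝ) :
    ∑ n, (x n - (1 / (Fintype.card ι : ℝ)) * ∑ m, x m) = 0 := by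
  rcases isEmpty_or_nonempty ι with hι | hι
  · simp
  rw [sum_sub_distrib, sum_const, card_univ, nsmul_eq_mul]
  field_simp
  ring

variable [DecidableEq ι] {x : ι → ℝ} {c M : ℝ}

theorem abs_sum_sub_le_card_compl_mul (hc : ∑ n, (x n - c) = 0) (hM : ∀ n, |x n - c| ≤ M)
    (T : Finset ι) : |∑ n ∈ T, (x n - c)| ≤ Tᶜ.card * M := by
  have hcompl : ∑ n ∈ T, (x n - c) = -∑ n ∈ Tᶜ, (x n - c) := by
    rw [eq_neg_iff_add_eq_zero, sum_add_sum_compl, hc]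
  calc |∑ n ∈ T, (x n - c)| = |∑ n ∈ Tᶜ, (x n - c)| := by rw [hcompl, abs_neg]
    _ ≤ ∑ n ∈ Tᶜ, |x n - c| := abs_sum_le_sum_abs _ _
    _ ≤ Tᶜ.card * M := by simpa using sum_le_card_nsmul Tᶜ _ M fun n _ ↦ hM n

theorem abs_average_sub_le (hc : ∑ n, (x n - c) = 0) (hM : ∀ n, |x n - c| ≤ M)
    {T : Finset ι} (hT : T.Nonempty) :
    |(∑ n ∈ T, x n) / T.card - c| ≤ Tᶜ.card * M / T.card := by
  have hcard : (T.card : ℝ) ≠ 0 := by exact_mod_cast hT.card_ne_zero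
  have hdiff : (∑ n ∈ T, x n) / T.card - c = (∑ n ∈ T, (x n - c)) / T.card := by
    rw [sum_sub_distrib, sum_const, nsmul_eq_mul]
    field_simp
  rw [hdiff, abs_div, Nat.abs_cast]
  gcongr
  exact abs_sum_sub_le_card_compl_mul hc hM T

end Mean

theorem univ_sdiff_eq_map_inl {α β : Type*} [Fintype α] [Fintype β] [DecidableEq α]
    [DecidableEq β] {D : Finset (α ⊕ β)} (hD : ∀ j, Sum.inr j ∈ D) :
    univ \ D = (univ.filter fun n ↦ Sum.inl n ∉ D).map Function.Embedding.inl := by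
  ext (n | j) <;> simp [hD]

theorem div_le_two_mul_div_add_one {a k : ℝ} (ha : 0 ≤ a) (hk : 1 ≤ k) :
    a / k ≤ 2 * a / (k + 1) := by
  rw [div_le_div_iff₀ (by linarith) (by linarith)]
  nlinarith

theorem stmt_17_general (R B : ℕ) (hRB : B < R)
    (hne : (Finset.univ : Finset (Fin R)).Nonempty)
    (x : Fin R → ℝ) (b : Fin B → ℝ)
    (xbar : ℝ) (hxbar : xbar = (1 / (R : ℝ)) * ∑ n, x n)
    (v : Fin R ⊕ Fin B → ℝ) (hv : v = Sum.elim x b)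
    (Lo Hi : Finset (Fin R ⊕ Fin B)) (hLoHi : Disjoint Lo Hi)
    (hLo : Lo.card = B) (hHi : Hi.card = B)
    (hbremoved : ∀ j : Fin B, Sum.inr j ∈ Lo ∪ Hi)
    (y : ℝ) (hy : y = (∑ i ∈ Finset.univ \ (Lo ∪ Hi), v i) / ((R : ℝ) - B)) :
    |y - xbar| ≤ (2 * B / ((R : ℝ) - B + 1)) * Finset.univ.sup' hne fun n => |x n - xbar| := by
  set M := univ.sup' hne fun n => |x n - xbar|
  have hM : ∀ n, |x n - xbar| ≤ M := fun n ↦ le_sup' (fun n => |x n - xbar|) (mem_univ n)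
  set T := univ.filter fun n ↦ Sum.inl n ∉ Lo ∪ Hi
  have hkept : univ \ (Lo ∪ Hi) = T.map Function.Embedding.inl :=
    univ_sdiff_eq_map_inl hbremoved
  have hT : T.card = R - B := by
    have := card_univ_sdiff (Lo ∪ Hi)
    rw [hkept, card_map, card_union_of_disjoint hLoHi, hLo, hHi, Fintype.card_sum,
      Fintype.card_fin, Fintype.card_fin] at this
    omega
  have hTc : Tᶜ.card = B := by rw [card_compl, hT, Fintype.card_fin]; omega
  have hRB' : (1 : ℝ) ≤ R - B := by
    have : (B : ℝ) + 1 ≤ R := by exact_mod_cast hRB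
    linarith
  have hy' : y = (∑ n ∈ T, x n) / T.card := by
    rw [hy, hkept, sum_map, hT, Nat.cast_sub hRB.le, hv]
    simp only [Function.Embedding.inl_apply, Sum.elim_inl]
  have hmean : ∑ n, (x n - xbar) = 0 := by
    simpa only [Fintype.card_fin, ← hxbar] using sum_sub_mean_eq_zero x
  have hdev := abs_average_sub_le hmean hM (T := T) (card_pos.mp (by omega))
  rw [← hy', hTc, hT, Nat.cast_sub hRB.le] at hdev
  calc |y - xbar| ≤ B * M / (R - B) := hdev
    _ ≤ 2 * (B * M) / (R - B + 1) :=
      div_le_two_mul_div_add_one (by positivity [(abs_nonneg _).trans (hM hne.choose)]) hRB'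
    _ = _ := by ring

theorem stmt_17 (R B : ℕ) (hB : 1 ≤ B) (hRB : B < R)
    (hne : (Finset.univ : Finset (Fin R)).Nonempty)
    (x : Fin R → ℝ) (b : Fin B → ℝ)
    (xbar : ℝ) (hxbar : xbar = (1 / (R : ℝ)) * ∑ n, x n)
    (v : Fin R ⊕ Fin B → ℝ) (hv : v = Sum.elim x b)
    (Lo Hi : Finset (Fin R ⊕ Fin B)) (hLoHi : Disjoint Lo Hi)
    (hLo : Lo.card = B) (hHi : Hi.card = B)
    (hLosmall : ∀ i ∈ Lo, ∀ j ∈ Finset.univ \ (Lo ∪ Hi), v i ≤ v j)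
    (hHilarge : ∀ i ∈ Hi, ∀ j ∈ Finset.univ \ (Lo ∪ Hi), v j ≤ v i)
    (hbremoved : ∀ j : Fin B, Sum.inr j ∈ Lo ∪ Hi)
    (y : ℝ) (hy : y = (∑ i ∈ Finset.univ \ (Lo ∪ Hi), v i) / ((R : ℝ) - B)) :
    |y - xbar| ≤ (2 * B / ((R : ℝ) - B + 1)) * Finset.univ.sup' hne fun n => |x n - xbar| :=
  stmt_17_general R B hRB hne x b xbar hxbar v hv Lo Hi hLoHi hLo hHi hbremoved y hy
end

section
/- Let x_1, ..., x_R ∈ R^D with average x̄, and let T ⊂ {1,...,R} with |T| = R − q for some 1 ≤ q < R. Let x̂_T = (1/|T|)∑_{m∈T} x_m. Then ‖x̂_T − x̄‖ ≤ (q/(R−q))·max_{m∉T} ‖x_m − x̂_T‖. -/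
/-! The points of `T` sum to `|T| • x̂_T`, so only the `q` points outside `T` contribute to
`R • (x̄ - x̂_T) = ∑ₘ (x_m - x̂_T)`. Hence `‖x̂_T - x̄‖ ≤ (q / R) · max_{m ∉ T} ‖x_m - x̂_T‖`,
and `q / R ≤ q / (R - q)`. -/

open Finset

section Average

variable {ι 𝕜 E : Type*} [Field 𝕜] [CharZero 𝕜] [AddCommGroup E] [Module 𝕜 E]

theorem Finset.sum_sub_average_eq_zero {s : Finset ι} (hs : s.Nonempty) (x : ι → E) :
    ∑ i ∈ s, (x i - (#s : 𝕜)⁻¹ • ∑ j ∈ s, x j) = 0 := by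
  have hcard : (#s : 𝕜) ≠ 0 := Nat.cast_ne_zero.mpr hs.card_ne_zero
  rw [sum_sub_distrib, sum_const, ← Nat.cast_smul_eq_nsmul 𝕜, smul_smul,
    mul_inv_cancel₀ hcard, one_smul, sub_self]

theorem Finset.average_sub_eq_average_sub {s : Finset ι} (hs : s.Nonempty) (x : ι → E) (c : E) :
    (#s : 𝕜)⁻¹ • ∑ i ∈ s, x i - c = (#s : 𝕜)⁻¹ • ∑ i ∈ s, (x i - c) := by
  have hcard : (#s : 𝕜) ≠ 0 := Nat.cast_ne_zero.mpr hs.card_ne_zero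
  rw [sum_sub_distrib, sum_const, smul_sub, ← Nat.cast_smul_eq_nsmul 𝕜, smul_smul,
    inv_mul_cancel₀ hcard, one_smul]

theorem Finset.average_univ_sub_average_eq [Fintype ι] [DecidableEq ι] {T : Finset ι}
    (hT : T.Nonempty) (x : ι → E) :
    (Fintype.card ι : 𝕜)⁻¹ • ∑ i, x i - (#T : 𝕜)⁻¹ • ∑ i ∈ T, x i =
      (Fintype.card ι : 𝕜)⁻¹ • ∑ i ∈ univ \ T, (x i - (#T : 𝕜)⁻¹ • ∑ j ∈ T, x j) := by
  have huniv : (univ : Finset ι).Nonempty := hT.mono (subset_univ T)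
  rw [← card_univ, average_sub_eq_average_sub huniv, ← sum_sdiff (subset_univ T),
    sum_sub_average_eq_zero hT, add_zero]

end Average

theorem norm_average_sub_average_univ_le {ι E : Type*} [Fintype ι] [DecidableEq ι]
    [NormedAddCommGroup E] [NormedSpace ℝ E] {T : Finset ι} (hT : T.Nonempty)
    (hne : (univ \ T).Nonempty) (x : ι → E) :
    ‖(#T : ℝ)⁻¹ • ∑ i ∈ T, x i - (Fintype.card ι : ℝ)⁻¹ • ∑ i, x i‖ ≤
      (#(univ \ T) / Fintype.card ι : ℝ) *
        (univ \ T).sup' hne fun i => ‖x i - (#T : ℝ)⁻¹ • ∑ j ∈ T, x j‖ := by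
  set xhat := (#T : ℝ)⁻¹ • ∑ i ∈ T, x i
  set M := (univ \ T).sup' hne fun i => ‖x i - xhat‖
  calc ‖xhat - (Fintype.card ι : ℝ)⁻¹ • ∑ i, x i‖
      = (Fintype.card ι : ℝ)⁻¹ * ‖∑ i ∈ univ \ T, (x i - xhat)‖ := by
        rw [norm_sub_rev, average_univ_sub_average_eq hT, norm_smul, norm_inv,
          Real.norm_natCast]
    _ ≤ (Fintype.card ι : ℝ)⁻¹ * (#(univ \ T) • M) := by
        gcongr
        exact (norm_sum_le _ _).trans (sum_le_card_nsmul _ _ _ fun i hi => le_sup' (fun i => ‖x i - xhat‖) hi)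
    _ = (#(univ \ T) / Fintype.card ι : ℝ) * M := by
        rw [nsmul_eq_mul]; ring

theorem stmt_18_general (R D q : ℕ) (hqR : q < R)
    (T : Finset (Fin R)) (hT : T.card = R - q)
    (hne : (Finset.univ \ T).Nonempty)
    (x : Fin R → EuclideanSpace ℝ (Fin D))
    (xbar xhatT : EuclideanSpace ℝ (Fin D))
    (hxbar : xbar = (R : ℝ)⁻¹ • ∑ m, x m)
    (hxhatT : xhatT = ((T.card : ℝ))⁻¹ • ∑ m ∈ T, x m) :
    ‖xhatT - xbar‖ ≤ ((q : ℝ) / ((R : ℝ) - q)) *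
      (Finset.univ \ T).sup' hne fun m => ‖x m - xhatT‖ := by
  have hTne : T.Nonempty := card_pos.mp (by omega)
  have hcompl : #(univ \ T) = q := by
    rw [card_univ_sdiff, Fintype.card_fin, hT]; omega
  have hqR' : (q : ℝ) < R := by exact_mod_cast hqR
  subst hxbar hxhatT
  calc _ ≤ (q / R : ℝ) * _ := by
        simpa only [hcompl, Fintype.card_fin] using norm_average_sub_average_univ_le hTne hne x
    _ ≤ _ := by
        gcongr
        · exact le_sup'_of_le _ hne.choose_spec (norm_nonneg _)
        · linarith

theorem stmt_18 (R D q : ℕ) (hq : 1 ≤ q) (hqR : q < R)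
    (T : Finset (Fin R)) (hT : T.card = R - q)
    (hne : (Finset.univ \ T).Nonempty)
    (x : Fin R → EuclideanSpace ℝ (Fin D))
    (xbar xhatT : EuclideanSpace ℝ (Fin D))
    (hxbar : xbar = (R : ℝ)⁻¹ • ∑ m, x m)
    (hxhatT : xhatT = ((T.card : ℝ))⁻¹ • ∑ m ∈ T, x m) :
    ‖xhatT - xbar‖ ≤ ((q : ℝ) / ((R : ℝ) - q)) *
      (Finset.univ \ T).sup' hne fun m => ‖x m - xhatT‖ :=
  stmt_18_general R D q hqR T hT hne x xbar xhatT hxbar hxhatT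
end
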